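/- arXiv:2007.05098 — 6 statements merged into one kernel-verified Lean document; each statement's English description precedes it below -/
import Mathlib

section
/- Let a ≤ b be real numbers and let f : [a,b] → ℝ be continuous. Define k : f([a,b]) → [a,b] by k(t) = inf { y ∈ [a,b] : f(y) = t }. Then k is Borel measurable, and for every t ∈ f([a,b]) one has f(k(t)) = t (in particular the infimum is attained). -/
open Set

/-- Let `a ≤ b` be real numbers and `f` continuous on `[a,b]`.
Define `k : f([a,b]) → [a,b]` by `k t = inf { y ∈ [a,b] : f y = t }`.
Then `k` is Borel measurable (as a function on the subtype `f '' Icc a b`),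
it takes values in `[a,b]`, and `f (k t) = t` for every `t ∈ f '' Icc a b`
(in particular the infimum is attained). -/
theorem stmt0 (a b : ℝ) (hab : a ≤ b) (f : ℝ → ℝ)
    (hf : ContinuousOn f (Set.Icc a b))
    (k : ℝ → ℝ)
    (hk : ∀ t : ℝ, k t = sInf {y : ℝ | y ∈ Set.Icc a b ∧ f y = t}) :
    Measurable (fun t : (f '' Set.Icc a b : Set ℝ) => k (t : ℝ)) ∧
      ∀ t ∈ f '' Set.Icc a b, k t ∈ Set.Icc a b ∧ f (k t) = t := by
  -- The level set is compact, so the infimum is attained.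
  have hattain : ∀ t ∈ f '' Set.Icc a b,
      k t ∈ {y : ℝ | y ∈ Set.Icc a b ∧ f y = t} := by
    intro t ht
    have hset : {y : ℝ | y ∈ Set.Icc a b ∧ f y = t} = Set.Icc a b ∩ f ⁻¹' {t} := by
      ext y; simp [Set.mem_inter_iff]
    have hclosed : IsClosed (Set.Icc a b ∩ f ⁻¹' {t}) :=
      hf.preimage_isClosed_of_isClosed isClosed_Icc isClosed_singleton
    have hcomp : IsCompact (Set.Icc a b ∩ f ⁻¹' {t}) :=
      isCompact_Icc.of_isClosed_subset hclosed Set.inter_subset_left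
    have hne : (Set.Icc a b ∩ f ⁻¹' {t}).Nonempty := by
      obtain ⟨y, hy, hfy⟩ := ht
      exact ⟨y, hy, by simp [hfy]⟩
    rw [hk t, hset]
    exact hcomp.sInf_mem hne
  refine ⟨?_, fun t ht => hattain t ht⟩
  apply measurable_of_Iic
  intro c
  have key : (fun t : (f '' Set.Icc a b : Set ℝ) => k (t : ℝ)) ⁻¹' Set.Iic c
      = Subtype.val ⁻¹' (f '' (Set.Icc a b ∩ Set.Iic c)) := by
    ext ⟨t, ht⟩
    simp only [Set.mem_preimage, Set.mem_Iic]
    constructor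
    · intro h
      have := hattain t ht
      exact ⟨k t, ⟨this.1, h⟩, this.2⟩
    · rintro ⟨y, ⟨hy, hyc⟩, hfy⟩
      have hbdd : BddBelow {z : ℝ | z ∈ Set.Icc a b ∧ f z = t} :=
        ⟨a, fun z hz => hz.1.1⟩
      have : k t ≤ y := by
        rw [hk t]; exact csInf_le hbdd ⟨hy, hfy⟩
      exact this.trans hyc
  rw [key]
  have hcomp : IsCompact (f '' (Set.Icc a b ∩ Set.Iic c)) :=
    (isCompact_Icc.inter_right isClosed_Iic).image_of_continuousOn
      (hf.mono Set.inter_subset_left)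
  exact measurable_subtype_coe hcomp.isClosed.measurableSet
end

section
/- Let I ⊆ ℝ be an interval and let k : I → ℝ be a function such that at every point t ∈ I, k is either left-continuous at t or right-continuous at t (continuity understood for the restriction of k to I). Then k is Borel measurable. -/
open Set

/-- Let `I ⊆ ℝ` be an interval and `k : I → ℝ` a function such that,
at every point `t ∈ I`, the restriction of `k` to `I` is left-continuous or
right-continuous at `t`. Then `k` is Borel measurable on `I`. -/
theorem stmt1 (I : Set ℝ) (hI : I.OrdConnected) (k : ℝ → ℝ)
    (hk : ∀ t ∈ I,
      ContinuousWithinAt k (I ∩ Set.Iic t) t ∨ ContinuousWithinAt k (I ∩ Set.Ici t) t) :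
    Measurable (fun x : I => k (x : ℝ)) := by
  apply measurable_of_isOpen
  intro U hU
  set E : Set ℝ := I ∩ k ⁻¹' U with hE
  have key : ∀ t : ℝ, ∃ (J : Set ℝ) (δ : ℝ), 0 < δ ∧
      (t ∈ E → (t ∈ J ∧ I ∩ J ⊆ k ⁻¹' U ∧
        (J = Ioc (t - δ) t ∨ J = Ico t (t + δ)))) := by
    intro t
    by_cases ht : t ∈ E
    · obtain ⟨htI, htU⟩ := ht
      rcases hk t htI with h | h
      · have hmem : k ⁻¹' U ∈ nhdsWithin t (I ∩ Iic t) := h (hU.mem_nhds htU)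
        rw [Metric.mem_nhdsWithin_iff] at hmem
        obtain ⟨ε, hε, hball⟩ := hmem
        refine ⟨Ioc (t - ε) t, ε, hε, fun _ => ⟨⟨by linarith, le_rfl⟩, ?_, Or.inl rfl⟩⟩
        rintro x ⟨hxI, hx1, hx2⟩
        apply hball
        refine ⟨?_, hxI, hx2⟩
        rw [Real.ball_eq_Ioo]
        exact ⟨hx1, by linarith⟩
      · have hmem : k ⁻¹' U ∈ nhdsWithin t (I ∩ Ici t) := h (hU.mem_nhds htU)
        rw [Metric.mem_nhdsWithin_iff] at hmem
        obtain ⟨ε, hε, hball⟩ := hmem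
        refine ⟨Ico t (t + ε), ε, hε, fun _ => ⟨⟨le_rfl, by linarith⟩, ?_, Or.inr rfl⟩⟩
        rintro x ⟨hxI, hx1, hx2⟩
        apply hball
        refine ⟨?_, hxI, hx1⟩
        rw [Real.ball_eq_Ioo]
        exact ⟨by linarith, hx2⟩
    · exact ⟨∅, 1, one_pos, fun h => absurd h ht⟩
  choose J δ hδ hJ using key
  set V : Set ℝ := ⋃ t ∈ E, interior (J t) with hV
  have hVopen : IsOpen V := isOpen_biUnion fun t _ => isOpen_interior
  have hJV : ∀ t ∈ E, interior (J t) ⊆ V := fun t ht => by rw [hV]; exact subset_biUnion_of_mem (u := fun t => interior (J t)) ht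
  set W : Set ℝ := E \ V with hW
  -- countability of W
  have hWc : W.Countable := by
    set WL : Set ℝ := {t | t ∈ W ∧ J t = Ioc (t - δ t) t} with hWL
    set WR : Set ℝ := {t | t ∈ W ∧ J t = Ico t (t + δ t)} with hWR
    have hchoiceL : ∀ t : ℝ, ∃ q : ℚ, t ∈ WL → (q : ℝ) ∈ Ioo (t - δ t) t := by
      intro t
      by_cases ht : t ∈ WL
      · obtain ⟨q, hq1, hq2⟩ := exists_rat_btwn (show t - δ t < t by linarith [hδ t])
        exact ⟨q, fun _ => ⟨hq1, hq2⟩⟩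
      · exact ⟨0, fun h => absurd h ht⟩
    have hchoiceR : ∀ t : ℝ, ∃ q : ℚ, t ∈ WR → (q : ℝ) ∈ Ioo t (t + δ t) := by
      intro t
      by_cases ht : t ∈ WR
      · obtain ⟨q, hq1, hq2⟩ := exists_rat_btwn (show t < t + δ t by linarith [hδ t])
        exact ⟨q, fun _ => ⟨hq1, hq2⟩⟩
      · exact ⟨0, fun h => absurd h ht⟩
    choose fL hfL using hchoiceL
    choose fR hfR using hchoiceR
    have hLkey : ∀ t ∈ WL, ∀ t' ∈ WL, fL t = fL t' → t < t' → False := by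
      intro t ht t' ht' hf hlt
      have hq := hfL t ht
      have hq' := hfL t' ht'
      rw [hf] at hq
      -- t ∈ Ioo (t' - δ t') t' = interior (J t') ⊆ V
      have htmem : t ∈ Ioo (t' - δ t') t' := ⟨lt_trans hq'.1 hq.2, hlt⟩
      have : t ∈ interior (J t') := by
        rw [ht'.2, interior_Ioc]; exact htmem
      exact ht.1.2 (hJV t' ht'.1.1 this)
    have hRkey : ∀ t ∈ WR, ∀ t' ∈ WR, fR t = fR t' → t < t' → False := by
      intro t ht t' ht' hf hlt
      have hq := hfR t ht
      have hq' := hfR t' ht'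
      rw [hf] at hq
      have htmem : t' ∈ Ioo t (t + δ t) := ⟨hlt, lt_trans hq'.1 hq.2⟩
      have : t' ∈ interior (J t) := by
        rw [ht.2, interior_Ico]; exact htmem
      exact ht'.1.2 (hJV t ht.1.1 this)
    have hLinj : InjOn fL WL := by
      intro t ht t' ht' hf
      rcases lt_trichotomy t t' with h | h | h
      · exact absurd (hLkey t ht t' ht' hf h) not_false
      · exact h
      · exact absurd (hLkey t' ht' t ht hf.symm h) not_false
    have hRinj : InjOn fR WR := by
      intro t ht t' ht' hf
      rcases lt_trichotomy t t' with h | h | h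
      · exact absurd (hRkey t ht t' ht' hf h) not_false
      · exact h
      · exact absurd (hRkey t' ht' t ht hf.symm h) not_false
    have hLc : WL.Countable :=
      (mapsTo_univ fL WL).countable_of_injOn hLinj countable_univ
    have hRc : WR.Countable :=
      (mapsTo_univ fR WR).countable_of_injOn hRinj countable_univ
    refine (hLc.union hRc).mono ?_
    intro t ht
    rcases (hJ t ht.1).2.2 with h | h
    · exact Or.inl ⟨ht, h⟩
    · exact Or.inr ⟨ht, h⟩
  have hB : MeasurableSet (V ∪ W) := hVopen.measurableSet.union hWc.measurableSet
  have hpre : (fun x : I => k (x : ℝ)) ⁻¹' U = Subtype.val ⁻¹' (V ∪ W) := by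
    ext x
    simp only [mem_preimage, mem_union]
    constructor
    · intro hx
      have hxE : (x : ℝ) ∈ E := ⟨x.2, hx⟩
      by_cases hxV : (x : ℝ) ∈ V
      · exact Or.inl hxV
      · exact Or.inr ⟨hxE, hxV⟩
    · rintro (hxV | hxW)
      · obtain ⟨t, htE, hxJ⟩ := mem_iUnion₂.mp hxV
        exact (hJ t htE).2.1 ⟨x.2, interior_subset hxJ⟩
      · exact hxW.1.2
  rw [hpre]
  exact hB.preimage measurable_subtype_coe
end

section
/- Let f : ℝ → ℝ be a continuous function. Then f has a Borel measurable right inverse defined on its range: there exists a Borel measurable function k : ℝ → ℝ such that f(k(t)) = t for every t in the image of f. -/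
open Set

private noncomputable def auxS (f : ℝ → ℝ) (n : ℕ) (t : ℝ) : Set ℝ :=
  Icc (-(n:ℝ)) n ∩ f ⁻¹' {t}

private noncomputable def auxm (f : ℝ → ℝ) (n : ℕ) (t : ℝ) : ℝ :=
  sInf (auxS f n t)

private lemma auxS_closed (f : ℝ → ℝ) (hf : Continuous f) (n : ℕ) (t : ℝ) :
    IsClosed (auxS f n t) :=
  isClosed_Icc.inter (isClosed_singleton.preimage hf)

private lemma auxS_bdd (f : ℝ → ℝ) (n : ℕ) (t : ℝ) : BddBelow (auxS f n t) :=
  bddBelow_Icc.mono inter_subset_left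

private lemma aux_img (f : ℝ → ℝ) (n : ℕ) :
    {t | (auxS f n t).Nonempty} = f '' Icc (-(n:ℝ)) n := by
  ext t
  simp only [mem_setOf_eq, mem_image, auxS, Set.Nonempty, mem_inter_iff, mem_preimage,
    mem_singleton_iff]

private lemma aux_img_meas (f : ℝ → ℝ) (hf : Continuous f) (n : ℕ) :
    MeasurableSet {t | (auxS f n t).Nonempty} := by
  rw [aux_img]
  exact (((convex_Icc _ _).isPreconnected).image f hf.continuousOn).ordConnected.measurableSet

private lemma auxm_meas (f : ℝ → ℝ) (hf : Continuous f) (n : ℕ) :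
    Measurable (auxm f n) := by
  apply measurable_of_Iio
  intro c
  have key : auxm f n ⁻¹' Iio c =
      (f '' (Icc (-(n:ℝ)) n ∩ Iio c)) ∪ ({t | (auxS f n t).Nonempty}ᶜ ∩ {t | (0:ℝ) < c}) := by
    ext t
    simp only [mem_preimage, mem_Iio, mem_union, mem_inter_iff, mem_compl_iff,
      mem_setOf_eq, mem_image]
    constructor
    · intro h
      by_cases hne : (auxS f n t).Nonempty
      · left
        have hmem : auxm f n t ∈ auxS f n t :=
          (auxS_closed f hf n t).csInf_mem hne (auxS_bdd f n t)
        exact ⟨auxm f n t, ⟨hmem.1, h⟩, hmem.2⟩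
      · right
        refine ⟨hne, ?_⟩
        have h0 : auxm f n t = 0 := by
          rw [auxm, not_nonempty_iff_eq_empty.mp hne, Real.sInf_empty]
        linarith [h0 ▸ h]
    · rintro (⟨y, ⟨hy1, hy2⟩, hy3⟩ | ⟨hne, hc⟩)
      · have : auxm f n t ≤ y := csInf_le (auxS_bdd f n t) ⟨hy1, by simp [hy3]⟩
        exact lt_of_le_of_lt this hy2
      · have h0 : auxm f n t = 0 := by
          rw [auxm, not_nonempty_iff_eq_empty.mp hne, Real.sInf_empty]
        rw [h0]; exact hc
  rw [key]
  apply MeasurableSet.union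
  · have hconv : Convex ℝ (Icc (-(n:ℝ)) n ∩ Iio c) := (convex_Icc _ _).inter (convex_Iio c)
    exact (hconv.isPreconnected.image f hf.continuousOn).ordConnected.measurableSet
  · apply MeasurableSet.inter
    · exact (aux_img_meas f hf n).compl
    · by_cases hc : (0:ℝ) < c
      · simp [hc]
      · simp [hc]

/-- A continuous function `f : ℝ → ℝ` has a Borel measurable right
inverse on its range: there is a Borel measurable `k : ℝ → ℝ` with `f (k t) = t`
for every `t` in the range of `f`. -/
theorem stmt2 (f : ℝ → ℝ) (hf : Continuous f) :
    ∃ k : ℝ → ℝ, Measurable k ∧ ∀ t ∈ Set.range f, f (k t) = t := by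
  classical
  have hex : ∀ t : ℝ, ∃ n : ℕ, (auxS f n t).Nonempty ∨ t ∉ Set.range f := by
    intro t
    by_cases ht : t ∈ Set.range f
    · obtain ⟨y, hy⟩ := ht
      refine ⟨⌈|y|⌉₊, Or.inl ⟨y, ⟨?_, ?_⟩, by simp [hy]⟩⟩
      · linarith [neg_abs_le y, Nat.le_ceil |y|]
      · linarith [le_abs_self y, Nat.le_ceil |y|]
    · exact ⟨0, Or.inr ht⟩
  have hpmeas : ∀ n : ℕ,
      MeasurableSet {t : ℝ | (auxS f n t).Nonempty ∨ t ∉ Set.range f} := by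
    intro n
    have : {t : ℝ | (auxS f n t).Nonempty ∨ t ∉ Set.range f} =
        {t | (auxS f n t).Nonempty} ∪ (Set.range f)ᶜ := rfl
    rw [this]
    exact (aux_img_meas f hf n).union
      (isPreconnected_range hf).ordConnected.measurableSet.compl
  refine ⟨fun t => auxm f (Nat.find (hex t)) t,
    Measurable.find (fun n => auxm_meas f hf n) hpmeas hex, ?_⟩
  intro t ht
  have hfind := Nat.find_spec (hex t)
  have hne : (auxS f (Nat.find (hex t)) t).Nonempty := hfind.resolve_right (by simpa using ht)
  have hmem := (auxS_closed f hf _ t).csInf_mem hne (auxS_bdd f _ t)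
  exact hmem.2
end

section
/- Let I ⊆ ℝ be an interval and let f : I → ℝ be a continuous function. Then there exists a Borel measurable function k : f(I) → I such that f(k(t)) = t for every t ∈ f(I). -/
open Set
lemma exists_cover (I : Set ℝ) (hne : I.Nonempty) :
    ∃ K : ℕ → Set ℝ, (∀ n, ∃ p q, p ∈ I ∧ q ∈ I ∧ K n = Icc p q) ∧ ∀ x ∈ I, ∃ n, x ∈ K n := by
  classical
  -- countable set D ⊆ I with: ∀ x ∈ I, ∃ p ∈ D, p ≤ x and ∃ q ∈ D, x ≤ q
  set Dmax : Set ℝ := {x ∈ I | ∀ y ∈ I, y ≤ x} with hDmax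
  set Dmin : Set ℝ := {x ∈ I | ∀ y ∈ I, x ≤ y} with hDmin
  set Dup : ℚ → Set ℝ := fun r =>
    if h : (I ∩ Ioi (r : ℝ)).Nonempty then {h.choose} else ∅ with hDup
  set Ddn : ℚ → Set ℝ := fun r =>
    if h : (I ∩ Iio (r : ℝ)).Nonempty then {h.choose} else ∅ with hDdn
  set D : Set ℝ := Dmax ∪ Dmin ∪ ((⋃ r, Dup r) ∪ ⋃ r, Ddn r) with hD
  have hDsub : D ⊆ I := by
    rintro x (( ⟨hx, -⟩ | ⟨hx, -⟩) | (hx | hx))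
    · exact hx
    · exact hx
    · simp only [mem_iUnion] at hx
      obtain ⟨r, hr⟩ := hx
      simp only [Dup] at hr
      split_ifs at hr with h
      · rw [mem_singleton_iff] at hr; rw [hr]; exact h.choose_spec.1
      · exact absurd hr (notMem_empty x)
    · simp only [mem_iUnion] at hx
      obtain ⟨r, hr⟩ := hx
      simp only [Ddn] at hr
      split_ifs at hr with h
      · rw [mem_singleton_iff] at hr; rw [hr]; exact h.choose_spec.1
      · exact absurd hr (notMem_empty x)
  have hDcnt : D.Countable := by
    refine (Countable.union (Countable.union ?_ ?_) (Countable.union ?_ ?_))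
    · exact Set.Subsingleton.countable (fun a ha b hb => le_antisymm (hb.2 a ha.1) (ha.2 b hb.1))
    · exact Set.Subsingleton.countable (fun a ha b hb => le_antisymm (ha.2 b hb.1) (hb.2 a ha.1))
    · exact countable_iUnion fun r => by
        simp only [Dup]; split_ifs <;> simp
    · exact countable_iUnion fun r => by
        simp only [Ddn]; split_ifs <;> simp
  have hup : ∀ x ∈ I, ∃ q ∈ D, x ≤ q := by
    intro x hx
    by_cases hmax : ∀ y ∈ I, y ≤ x
    · exact ⟨x, Or.inl (Or.inl ⟨hx, hmax⟩), le_rfl⟩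
    · push_neg at hmax
      obtain ⟨y, hy, hxy⟩ := hmax
      obtain ⟨r, hr1, hr2⟩ := exists_rat_btwn hxy
      have hne' : (I ∩ Ioi (r : ℝ)).Nonempty := ⟨y, hy, hr2⟩
      refine ⟨hne'.choose, Or.inr (Or.inl (mem_iUnion.2 ⟨r, ?_⟩)), ?_⟩
      · simp only [Dup]; rw [dif_pos hne']; rfl
      · exact le_of_lt (lt_trans hr1 hne'.choose_spec.2)
  have hdn : ∀ x ∈ I, ∃ p ∈ D, p ≤ x := by
    intro x hx
    by_cases hmin : ∀ y ∈ I, x ≤ y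
    · exact ⟨x, Or.inl (Or.inr ⟨hx, hmin⟩), le_rfl⟩
    · push_neg at hmin
      obtain ⟨y, hy, hxy⟩ := hmin
      obtain ⟨r, hr1, hr2⟩ := exists_rat_btwn hxy
      have hne' : (I ∩ Iio (r : ℝ)).Nonempty := ⟨y, hy, hr1⟩
      refine ⟨hne'.choose, Or.inr (Or.inr (mem_iUnion.2 ⟨r, ?_⟩)), ?_⟩
      · simp only [Ddn]; rw [dif_pos hne']; rfl
      · exact le_of_lt (lt_trans hne'.choose_spec.2 hr2)
  obtain ⟨x₀, hx₀⟩ := hne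
  have hDne : D.Nonempty := (hup x₀ hx₀).imp fun q hq => hq.1
  obtain ⟨g, hg⟩ := Set.Countable.exists_eq_range hDcnt hDne
  refine ⟨fun n => Icc (g (Nat.unpair n).1) (g (Nat.unpair n).2), fun n => ?_, fun x hx => ?_⟩
  · exact ⟨_, _, hDsub (hg ▸ mem_range_self _), hDsub (hg ▸ mem_range_self _), rfl⟩
  · obtain ⟨p, hp, hpx⟩ := hdn x hx
    obtain ⟨q, hq, hxq⟩ := hup x hx
    rw [hg] at hp hq
    obtain ⟨i, rfl⟩ := hp
    obtain ⟨j, rfl⟩ := hq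
    exact ⟨Nat.pair i j, by simp [Nat.unpair_pair, hpx, hxq]⟩

/-- Let `I ⊆ ℝ` be an interval and `f` a continuous function on `I`.
Then there is a Borel measurable function `k : f(I) → I` such that `f (k t) = t`
for every `t ∈ f(I)`. -/
theorem stmt3 (I : Set ℝ) (hI : I.OrdConnected) (f : ℝ → ℝ)
    (hf : ContinuousOn f I) :
    ∃ k : (f '' I : Set ℝ) → I, Measurable k ∧ ∀ t : (f '' I : Set ℝ), f (k t) = (t : ℝ) := by
  classical
  rcases eq_empty_or_nonempty I with rfl | hne
  · exact ⟨fun t => absurd t.2 (by simp), fun s _ => by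
      convert MeasurableSet.empty using 1
      ext t; exact absurd t.2 (by simp), fun t => absurd t.2 (by simp)⟩
  obtain ⟨K, hK, hcov⟩ := exists_cover I hne
  have hKsub : ∀ n, K n ⊆ I := by
    intro n
    obtain ⟨p, q, hp, hq, hpq⟩ := hK n
    rw [hpq]; exact hI.out hp hq
  have hKcpt : ∀ n, IsCompact (K n) := by
    intro n; obtain ⟨p, q, _, _, hpq⟩ := hK n; rw [hpq]; exact isCompact_Icc
  -- key compactness fact
  have hScpt : ∀ n c, IsCompact (K n ∩ Iic c) := by
    intro n c
    exact (hKcpt n).inter_right isClosed_Iic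
  have hfibercpt : ∀ n t, IsCompact (K n ∩ f ⁻¹' {t}) := by
    intro n t
    refine IsCompact.of_isClosed_subset (hKcpt n) ?_ inter_subset_left
    have hcl : IsClosed (K n) := by
      obtain ⟨p, q, _, _, hpq⟩ := hK n; rw [hpq]; exact isClosed_Icc
    exact (hf.mono (hKsub n)).preimage_isClosed_of_isClosed hcl isClosed_singleton
  -- the selection function
  set kf : ℝ → ℝ := fun t =>
    if h : ∃ n, t ∈ f '' K n then sInf (K (Nat.find h) ∩ f ⁻¹' {t}) else hne.choose with hkf
  have hmem : ∀ t ∈ f '' I, ∃ h : ∃ n, t ∈ f '' K n,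
      kf t ∈ K (Nat.find h) ∩ f ⁻¹' {t} := by
    rintro t ⟨x, hx, rfl⟩
    obtain ⟨n, hn⟩ := hcov x hx
    have h : ∃ n, f x ∈ f '' K n := ⟨n, mem_image_of_mem f hn⟩
    refine ⟨h, ?_⟩
    have hnsp := Nat.find_spec h
    obtain ⟨y, hy, hyt⟩ := hnsp
    have hnonempty : (K (Nat.find h) ∩ f ⁻¹' {f x}).Nonempty := ⟨y, hy, hyt⟩
    rw [hkf]; simp only [dif_pos h]
    exact (hfibercpt _ _).sInf_mem hnonempty
  have hmemI : ∀ t ∈ f '' I, kf t ∈ I := by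
    intro t ht
    obtain ⟨h, hm⟩ := hmem t ht
    exact hKsub _ hm.1
  have hft : ∀ t ∈ f '' I, f (kf t) = t := by
    intro t ht
    obtain ⟨h, hm⟩ := hmem t ht
    exact hm.2
  -- measurability of image sets
  have himgmeas : ∀ n c, MeasurableSet (f '' (K n ∩ Iic c)) := by
    intro n c
    exact ((hScpt n c).image_of_continuousOn (hf.mono (inter_subset_left.trans (hKsub n)))).measurableSet
  have himgmeas' : ∀ n, MeasurableSet (f '' K n) := by
    intro n
    exact ((hKcpt n).image_of_continuousOn (hf.mono (hKsub n))).measurableSet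
  -- sublevel characterization
  have hsub : ∀ c, ∀ t ∈ f '' I,
      (kf t ≤ c ↔ ∃ n, (t ∈ f '' K n ∧ ∀ m < n, t ∉ f '' K m) ∧ t ∈ f '' (K n ∩ Iic c)) := by
    intro c t ht
    obtain ⟨h, hm⟩ := hmem t ht
    constructor
    · intro hle
      refine ⟨Nat.find h, ⟨Nat.find_spec h, fun m hm' => Nat.find_min h hm'⟩, kf t, ⟨hm.1, hle⟩, hm.2⟩
    · rintro ⟨n, ⟨hn1, hn2⟩, x, ⟨hxK, hxc⟩, hxt⟩
      have : Nat.find h = n := by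
        refine le_antisymm (Nat.find_le hn1) ?_
        by_contra hlt
        exact hn2 _ (lt_of_not_ge hlt) (Nat.find_spec h)
      rw [hkf]; simp only [dif_pos h, this]
      exact le_trans (csInf_le (hfibercpt n t).bddBelow ⟨hxK, hxt⟩) hxc
  -- assemble
  refine ⟨fun t => ⟨kf t, hmemI t t.2⟩, ?_, fun t => hft t t.2⟩
  refine Measurable.subtype_mk ?_
  refine measurable_of_Iic fun c => ?_
  have : (fun t : (f '' I : Set ℝ) => kf ↑t) ⁻¹' Iic c =
      Subtype.val ⁻¹' (⋃ n, ((f '' K n \ ⋃ m, ⋃ _ : m < n, f '' K m) ∩ f '' (K n ∩ Iic c))) := by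
    ext t
    simp only [mem_preimage, mem_Iic, mem_iUnion, mem_inter_iff, mem_diff, not_exists]
    rw [hsub c ↑t t.2]
  rw [this]
  refine measurable_subtype_coe ?_
  refine MeasurableSet.iUnion fun n => ?_
  exact (((himgmeas' n).diff (MeasurableSet.iUnion fun m => MeasurableSet.iUnion fun _ => himgmeas' m))).inter (himgmeas n c)
end

section
/- Let Ω ⊆ ℝⁿ be a domain (a nonempty open set), let μ : Ω → ℝ be a (Lebesgue) measurable function that is finite everywhere, and let f : ℝ → ℝ be a continuous function whose image contains the image of μ, i.e., Im(f) ⊇ Im(μ). Then there exists a (Lebesgue) measurable function q : Ω → ℝ such that f(q(x)) = μ(x) for all x ∈ Ω. -/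
/-!
A continuous `f : ℝ → ℝ` has a Borel measurable right inverse `g` on its range, and then
`q := g ∘ μ` works, since a Borel function of a Lebesgue measurable function is Lebesgue
measurable. On the image of a compact set `K`, take `g y` to be the least point of
`K ∩ f ⁻¹' {y}`: then `g y ≤ c` exactly when `y ∈ f '' (K ∩ Iic c)`, a compact, hence Borel,
set. Exhausting `ℝ` by the balls `closedBall 0 n` and gluing the pieces along the
disjointed sequence of their images gives `g` on all of `range f`.
-/

open MeasureTheory Set

section LeastPreimage

variable {Y : Type*} {f : ℝ → Y} {K : Set ℝ} {y : Y}

/-- The point `sSup K` is added so that the infimum is always attained; it does not change the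
infimum when `y ∈ f '' K`, since `sSup K` bounds `K`. -/
noncomputable def leastPreimageIn (f : ℝ → Y) (K : Set ℝ) (y : Y) : ℝ :=
  sInf (K ∩ f ⁻¹' {y} ∪ {sSup K})

lemma bddBelow_inter_preimage_union (hK : IsCompact K) :
    BddBelow (K ∩ f ⁻¹' {y} ∪ {sSup K}) :=
  (hK.bddBelow.mono inter_subset_left).union bddBelow_singleton

lemma leastPreimageIn_le_of_mem (hK : IsCompact K) {t : ℝ} (ht : t ∈ K) (hft : f t = y) :
    leastPreimageIn f K y ≤ t :=
  csInf_le (bddBelow_inter_preimage_union hK) (Or.inl ⟨ht, hft⟩)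

lemma leastPreimageIn_le_sSup (hK : IsCompact K) : leastPreimageIn f K y ≤ sSup K :=
  csInf_le (bddBelow_inter_preimage_union hK) (Or.inr rfl)

variable [TopologicalSpace Y] [T2Space Y]

lemma leastPreimageIn_mem (hK : IsCompact K) (hf : ContinuousOn f K) :
    leastPreimageIn f K y ∈ K ∩ f ⁻¹' {y} ∪ {sSup K} :=
  ((hf.preimage_isClosed_of_isClosed hK.isClosed isClosed_singleton).union
    isClosed_singleton).csInf_mem ⟨sSup K, Or.inr rfl⟩ (bddBelow_inter_preimage_union hK)

lemma apply_leastPreimageIn (hK : IsCompact K) (hf : ContinuousOn f K) (hy : y ∈ f '' K) :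
    f (leastPreimageIn f K y) = y := by
  obtain ⟨t, ht, hft⟩ := hy
  rcases leastPreimageIn_mem (y := y) hK hf with h | h
  · exact h.2
  · have htop : t = sSup K := le_antisymm (le_csSup hK.bddAbove ht)
      (h ▸ leastPreimageIn_le_of_mem hK ht hft)
    rw [h, ← htop, hft]

lemma measurable_leastPreimageIn [MeasurableSpace Y] [OpensMeasurableSpace Y]
    (hK : IsCompact K) (hf : ContinuousOn f K) : Measurable (leastPreimageIn f K) := by
  refine measurable_of_Iic fun c => ?_
  have hpre : leastPreimageIn f K ⁻¹' Iic c = f '' (K ∩ Iic c) ∪ {_y | sSup K ≤ c} := by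
    ext y
    refine ⟨fun hy => ?_, ?_⟩
    · rcases leastPreimageIn_mem (y := y) hK hf with h | h
      · exact Or.inl ⟨_, ⟨h.1, hy⟩, h.2⟩
      · exact Or.inr (h ▸ hy)
    · rintro (⟨t, ⟨ht, htc⟩, hft⟩ | hc)
      · exact (leastPreimageIn_le_of_mem hK ht hft).trans htc
      · exact (leastPreimageIn_le_sSup hK).trans hc
  rw [hpre]
  exact ((hK.inter_right isClosed_Iic).image_of_continuousOn
    (hf.mono inter_subset_left)).isClosed.measurableSet.union (.const _)

end LeastPreimage

lemma exists_measurable_rightInvOn_iUnion {α β : Type*} [MeasurableSpace α] [MeasurableSpace β]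
    {f : α → β} {A : ℕ → Set β} (hA : ∀ n, MeasurableSet (A n))
    (h : ∀ n, ∃ g : β → α, Measurable g ∧ RightInvOn g f (A n)) :
    ∃ g : β → α, Measurable g ∧ RightInvOn g f (⋃ n, A n) := by
  choose g hgm hg using h
  obtain ⟨G, hGm, hG⟩ := exists_measurable_piecewise (disjointed A) (.disjointed hA) g hgm
    fun i j hij => by simp [(disjoint_disjointed A hij).inter_eq]
  refine ⟨G, hGm, fun y hy => ?_⟩
  rw [← iUnion_disjointed, mem_iUnion] at hy
  obtain ⟨n, hn⟩ := hy
  rw [hG n hn]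
  exact hg n (disjointed_subset A n hn)

lemma Continuous.exists_measurable_rightInvOn_range {Y : Type*} [TopologicalSpace Y] [T2Space Y]
    [MeasurableSpace Y] [OpensMeasurableSpace Y] {f : ℝ → Y} (hf : Continuous f) :
    ∃ g : Y → ℝ, Measurable g ∧ RightInvOn g f (range f) := by
  have hcover : range f = ⋃ n : ℕ, f '' Metric.closedBall 0 n := by
    rw [← image_iUnion, Metric.iUnion_closedBall_nat, image_univ]
  rw [hcover]
  refine exists_measurable_rightInvOn_iUnion
    (fun n => ((isCompact_closedBall 0 n).image hf).isClosed.measurableSet) fun n => ?_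
  exact ⟨_, measurable_leastPreimageIn (isCompact_closedBall 0 n) hf.continuousOn,
    fun y => apply_leastPreimageIn (isCompact_closedBall 0 n) hf.continuousOn⟩

theorem stmt4_general (n : ℕ) (Ω : Set (Fin n → ℝ))
    (μ : (Fin n → ℝ) → ℝ) (hμ : NullMeasurable μ (volume.restrict Ω))
    (f : ℝ → ℝ) (hf : Continuous f) (him : μ '' Ω ⊆ Set.range f) :
    ∃ q : (Fin n → ℝ) → ℝ, NullMeasurable q (volume.restrict Ω) ∧
      ∀ x ∈ Ω, f (q x) = μ x := by
  obtain ⟨g, hgm, hg⟩ := hf.exists_measurable_rightInvOn_range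
  exact ⟨g ∘ μ, hgm.comp_nullMeasurable hμ, fun x hx => hg (him (mem_image_of_mem μ hx))⟩

/-- Let `Ω ⊆ ℝⁿ` be a domain (nonempty open set), `μ : Ω → ℝ` a
Lebesgue measurable function (finite everywhere, being real-valued), and
`f : ℝ → ℝ` a continuous function with `Im(f) ⊇ Im(μ)`. Then there is a Lebesgue
measurable `q : Ω → ℝ` with `f (q x) = μ x` for all `x ∈ Ω`. Lebesgue measurability
on `Ω` is expressed as null-measurability with respect to the Lebesgue measure
restricted to `Ω`. -/
theorem stmt4 (n : ℕ) (Ω : Set (Fin n → ℝ)) (hΩo : IsOpen Ω) (hΩne : Ω.Nonempty)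
    (μ : (Fin n → ℝ) → ℝ) (hμ : NullMeasurable μ (volume.restrict Ω))
    (f : ℝ → ℝ) (hf : Continuous f) (him : μ '' Ω ⊆ Set.range f) :
    ∃ q : (Fin n → ℝ) → ℝ, NullMeasurable q (volume.restrict Ω) ∧
      ∀ x ∈ Ω, f (q x) = μ x :=
  stmt4_general n Ω μ hμ f hf him
end

section
/- Let Ω ⊆ ℝⁿ be a domain (a nonempty open set), let u, v : Ω → ℝ be (Lebesgue) measurable functions that are finite everywhere, and let F : ℝ → ℝ be continuously differentiable (C¹). Then there exists a (Lebesgue) measurable function w : Ω → ℝ such that F(u(x)) − F(v(x)) = (u(x) − v(x))·F′(w(x)) for all x ∈ Ω (a measurable-selection version of the Lagrange mean value theorem). -/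
/-!
For a `C¹` function `F`, the parameters `θ ∈ [0, 1]` with
`F b - F a = (b - a) * F' (a + θ (b - a))` form a closed subset of `(ℝ × ℝ) × [0, 1]` with
nonempty fibers over every `(a, b)`. Choosing the least parameter in each fiber gives a lower
semicontinuous, hence Borel, function of `(a, b)`, because projecting along the compact factor
`[0, 1]` is a closed map. Composing with `(u, v)` yields the measurable intermediate point `w`.
-/

open MeasureTheory Set

theorem isClosed_image_fst_of_subset_prod {X Y : Type*} [TopologicalSpace X] [TopologicalSpace Y]
    {D : Set (X × Y)} {K : Set Y} (hD : IsClosed D) (hK : IsCompact K) (hDK : D ⊆ univ ×ˢ K) :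
    IsClosed (Prod.fst '' D) := by
  have : CompactSpace K := isCompact_iff_compactSpace.mp hK
  have hD' : Prod.fst '' D = Prod.fst '' (Prod.map id Subtype.val ⁻¹' D : Set (X × K)) := by
    ext x
    constructor
    · rintro ⟨⟨x, y⟩, hxy, rfl⟩
      exact ⟨⟨x, ⟨y, (hDK hxy).2⟩⟩, hxy, rfl⟩
    · rintro ⟨⟨x, y⟩, hxy, rfl⟩
      exact ⟨⟨x, y⟩, hxy, rfl⟩
  rw [hD']
  exact isClosedMap_fst_of_compactSpace _ (hD.preimage (by fun_prop))

theorem bddBelow_fiber {X : Type*} {C : Set (X × ℝ)} {K : Set ℝ} (hK : BddBelow K)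
    (hCK : C ⊆ univ ×ˢ K) (x : X) : BddBelow (Prod.mk x ⁻¹' C) :=
  hK.mono fun _ ht => (hCK ht).2

section FiberInf

variable {X : Type*} [TopologicalSpace X] {C : Set (X × ℝ)} {K : Set ℝ}

theorem sInf_fiber_mem (hC : IsClosed C) (hK : BddBelow K) (hCK : C ⊆ univ ×ˢ K)
    (hne : ∀ x, (Prod.mk x ⁻¹' C).Nonempty) (x : X) :
    (x, sInf (Prod.mk x ⁻¹' C)) ∈ C :=
  (hC.preimage (by fun_prop)).csInf_mem (hne x) (bddBelow_fiber hK hCK x)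

theorem lowerSemicontinuous_sInf_fiber (hC : IsClosed C) (hK : IsCompact K)
    (hCK : C ⊆ univ ×ˢ K) (hne : ∀ x, (Prod.mk x ⁻¹' C).Nonempty) :
    LowerSemicontinuous fun x => sInf (Prod.mk x ⁻¹' C) := by
  rw [lowerSemicontinuous_iff_isClosed_preimage]
  intro s
  have hsub : (fun x => sInf (Prod.mk x ⁻¹' C)) ⁻¹' Iic s =
      Prod.fst '' (C ∩ {q | q.2 ≤ s}) := by
    ext x
    constructor
    · intro hx
      exact ⟨_, ⟨sInf_fiber_mem hC hK.bddBelow hCK hne x, hx⟩, rfl⟩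
    · rintro ⟨⟨x, t⟩, ⟨hxt, hts⟩, rfl⟩
      exact csInf_le_of_le (bddBelow_fiber hK.bddBelow hCK x) hxt hts
  rw [hsub]
  exact isClosed_image_fst_of_subset_prod (hC.inter (isClosed_le (by fun_prop) continuous_const))
    hK (inter_subset_left.trans hCK)

end FiberInf

theorem exists_mem_Icc_sub_eq_mul_deriv {F : ℝ → ℝ} (hF : Differentiable ℝ F) (a b : ℝ) :
    ∃ θ ∈ Icc (0 : ℝ) 1, F b - F a = (b - a) * deriv F (a + θ * (b - a)) := by
  have hlt : ∀ a b, a < b → ∃ c ∈ uIcc a b, F b - F a = (b - a) * deriv F c := by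
    intro a b hab
    obtain ⟨c, hc, hc'⟩ := exists_deriv_eq_slope F hab hF.continuous.continuousOn
      hF.differentiableOn
    refine ⟨c, Icc_subset_uIcc (Ioo_subset_Icc_self hc), ?_⟩
    rw [hc', mul_div_cancel₀ _ (sub_ne_zero.2 hab.ne')]
  obtain ⟨c, hc, hFc⟩ : ∃ c ∈ uIcc a b, F b - F a = (b - a) * deriv F c := by
    rcases lt_trichotomy a b with hab | rfl | hab
    · exact hlt a b hab
    · exact ⟨a, by simp⟩
    · obtain ⟨c, hc, hFc⟩ := hlt b a hab
      exact ⟨c, uIcc_comm a b ▸ hc, by linarith⟩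
  rw [← segment_eq_uIcc, segment_eq_image'] at hc
  obtain ⟨θ, hθ, rfl⟩ := hc
  exact ⟨θ, hθ, hFc⟩

def meanValueParams (F : ℝ → ℝ) : Set ((ℝ × ℝ) × ℝ) :=
  {q | q.2 ∈ Icc 0 1 ∧
    F q.1.2 - F q.1.1 = (q.1.2 - q.1.1) * deriv F (q.1.1 + q.2 * (q.1.2 - q.1.1))}

theorem isClosed_meanValueParams {F : ℝ → ℝ} (hF : ContDiff ℝ 1 F) :
    IsClosed (meanValueParams F) := by
  have hFc : Continuous F := hF.continuous
  have hF'c : Continuous (deriv F) := hF.continuous_deriv le_rfl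
  exact (isClosed_Icc.preimage continuous_snd).inter (isClosed_eq (by fun_prop) (by fun_prop))

theorem meanValueParams_subset (F : ℝ → ℝ) : meanValueParams F ⊆ univ ×ˢ Icc 0 1 :=
  fun _ hq => ⟨trivial, hq.1⟩

theorem nonempty_fiber_meanValueParams {F : ℝ → ℝ} (hF : Differentiable ℝ F)
    (p : ℝ × ℝ) : (Prod.mk p ⁻¹' meanValueParams F).Nonempty :=
  exists_mem_Icc_sub_eq_mul_deriv hF p.1 p.2

theorem stmt5_general (n : ℕ) (Ω : Set (Fin n → ℝ))
    (u v : (Fin n → ℝ) → ℝ)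
    (hu : NullMeasurable u (volume.restrict Ω))
    (hv : NullMeasurable v (volume.restrict Ω))
    (F : ℝ → ℝ) (hF : ContDiff ℝ 1 F) :
    ∃ w : (Fin n → ℝ) → ℝ, NullMeasurable w (volume.restrict Ω) ∧
      ∀ x ∈ Ω, F (u x) - F (v x) = (u x - v x) * deriv F (w x) := by
  set θ : ℝ × ℝ → ℝ := fun p => sInf (Prod.mk p ⁻¹' meanValueParams F)
  have hne := nonempty_fiber_meanValueParams (hF.differentiable one_ne_zero)
  have hθ : Measurable θ := (lowerSemicontinuous_sInf_fiber (isClosed_meanValueParams hF)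
    isCompact_Icc (meanValueParams_subset F) hne).measurable
  have hmem : ∀ p, (p, θ p) ∈ meanValueParams F :=
    sInf_fiber_mem (isClosed_meanValueParams hF) bddBelow_Icc (meanValueParams_subset F) hne
  have hg : Measurable fun p : ℝ × ℝ => p.1 + θ p * (p.2 - p.1) := by fun_prop
  refine ⟨fun x => u x + θ (u x, v x) * (v x - u x),
    (hg.comp_aemeasurable (hu.aemeasurable.prodMk hv.aemeasurable)).nullMeasurable, ?_⟩
  intro x _
  linarith [(hmem (u x, v x)).2]

/-- measurable-selection version of the Lagrange mean value theorem.
Let `Ω ⊆ ℝⁿ` be a domain, `u v : Ω → ℝ` Lebesgue measurable functions, and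
`F : ℝ → ℝ` of class `C¹`. Then there is a Lebesgue measurable `w : Ω → ℝ` with
`F (u x) - F (v x) = (u x - v x) * F' (w x)` for all `x ∈ Ω`. -/
theorem stmt5 (n : ℕ) (Ω : Set (Fin n → ℝ)) (hΩo : IsOpen Ω) (hΩne : Ω.Nonempty)
    (u v : (Fin n → ℝ) → ℝ)
    (hu : NullMeasurable u (volume.restrict Ω))
    (hv : NullMeasurable v (volume.restrict Ω))
    (F : ℝ → ℝ) (hF : ContDiff ℝ 1 F) :
    ∃ w : (Fin n → ℝ) → ℝ, NullMeasurable w (volume.restrict Ω) ∧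
      ∀ x ∈ Ω, F (u x) - F (v x) = (u x - v x) * deriv F (w x) :=
  stmt5_general n Ω u v hu hv F hF
end
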